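/- (Murnaghan–Nakayama rule, fermionic form) In the charged free fermion Fock space, the current mode J_k for nonzero integer k acts on the basis vector |α⟩ labelled by a partition α by J_k|α⟩ = Σ_{β ∈ R_{k,α}} sgn(α,β) |β⟩, where R_{k,α} is the set of partitions obtained from α by removing a ribbon of length k (if k ≥ 1) or adding one of length −k (if k ≤ −1), and sgn is the corresponding ribbon height sign. -/

import Mathlib

open scoped Classical

/-- A partition: a weakly decreasing, finitely supported sequence of naturals. -/
def Ptn : Type := {f : ℕ → ℕ // Antitone f ∧ (Function.support f).Finite}

/-- The weight |μ| of a partition. -/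
noncomputable def wtP (μ : Ptn) : ℕ := ∑ᶠ i, μ.1 i

/-- The cells of the skew diagram f/g. -/
def cellsSk (f g : ℕ → ℕ) : Set (ℕ × ℕ) := {c | g c.1 ≤ c.2 ∧ c.2 < f c.1}

/-- Adjacency of cells (sharing an edge). -/
def adjC (a b : ℕ × ℕ) : Prop :=
  (a.1 = b.1 ∧ (a.2 = b.2 + 1 ∨ b.2 = a.2 + 1)) ∨
  (a.2 = b.2 ∧ (a.1 = b.1 + 1 ∨ b.1 = a.1 + 1))

/-- f/g is a ribbon (border strip) of length k : it has k cells, is connected,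
and contains no 2×2 block. -/
def IsRibbon (f g : ℕ → ℕ) (k : ℕ) : Prop :=
  (∀ i, g i ≤ f i) ∧ Nat.card (cellsSk f g) = k ∧ 0 < k ∧
  (∀ a ∈ cellsSk f g, ∀ b ∈ cellsSk f g,
    Relation.ReflTransGen (fun x y => adjC x y ∧ x ∈ cellsSk f g ∧ y ∈ cellsSk f g) a b) ∧
  ¬∃ i j, (i, j) ∈ cellsSk f g ∧ (i, j + 1) ∈ cellsSk f g ∧
      (i + 1, j) ∈ cellsSk f g ∧ (i + 1, j + 1) ∈ cellsSk f g

/-- The height of a ribbon: number of occupied rows minus one. -/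
noncomputable def ribbonHt (f g : ℕ → ℕ) : ℕ :=
  Nat.card {i : ℕ | ∃ j, (i, j) ∈ cellsSk f g} - 1

/-- The charge-0 sector of the fermionic Fock space: the free module on partitions. -/
abbrev Fock (R : Type) [Semiring R] := Ptn →₀ R

/-- The set of occupied fermion (ψ) indices of the state |μ⟩ : D(μ) = {i − μ_{i+1} : i ∈ ℕ}. -/
def Dset (μ : Ptn) : Set ℤ := Set.range fun i : ℕ => (i : ℤ) - (μ.1 i : ℤ)

/-- The fermionic sign produced by ψ_a ψ*_b acting on the Maya diagram of l. -/
noncomputable def moveCoeff (l : Ptn) (a b : ℤ) : ℤ :=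
  (-1) ^ (Nat.card {d : ℤ | d ∈ Dset l ∧ d < -b} + Nat.card {d : ℤ | d ∈ Dset l \ {-b} ∧ d < a})

/-- The operator ψ_a ψ*_b on the charge-0 Fock space: it removes the particle at
index −b and creates one at index a, with the appropriate fermionic sign. -/
noncomputable def psiPsiStar (R : Type) [Field R] (a b : ℤ) : Fock R →ₗ[R] Fock R :=
  Finsupp.lift (Fock R) R Ptn fun l =>
    if h : (-b) ∈ Dset l ∧ a ∉ Dset l \ {-b} ∧ ∃ m : Ptn, Dset m = insert a (Dset l \ {-b})
    then (moveCoeff l a b : R) • Finsupp.single h.2.2.choose (1 : R)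
    else 0

/-- The normally ordered product :ψ_a ψ*_b: = ψ_a ψ*_b − ⟨0|ψ_a ψ*_b|0⟩. -/
noncomputable def nord (R : Type) [Field R] (a b : ℤ) : Fock R →ₗ[R] Fock R :=
  psiPsiStar R a b - (if a + b = 0 ∧ b ≤ 0 then (1 : R) else 0) • LinearMap.id

/-- The U(1) current mode J_m = Σ_n :ψ_{m−n} ψ*_n:. -/
noncomputable def Jop (R : Type) [Field R] (m : ℤ) : Fock R →ₗ[R] Fock R :=
  Finsupp.lift (Fock R) R Ptn fun l => ∑ᶠ n : ℤ, nord R (m - n) n (Finsupp.single l 1)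


/-- enumeration map -/
def uf (μ : Ptn) : ℕ → ℤ := fun i => (i : ℤ) - (μ.1 i : ℤ)

lemma uf_strictMono (μ : Ptn) : StrictMono (uf μ) := by
  apply strictMono_nat_of_lt_succ
  intro n
  have : μ.1 (n+1) ≤ μ.1 n := μ.2.1 (Nat.le_succ n)
  simp only [uf, Nat.succ_eq_add_one]
  push_cast
  omega

lemma Dset_eq_range (μ : Ptn) : Dset μ = Set.range (uf μ) := rfl

lemma Dset_injective : Function.Injective Dset := by
  intro μ ν h
  have h2 : uf μ = uf ν := ((uf_strictMono μ).range_inj (uf_strictMono ν)).mp h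
  have : μ.1 = ν.1 := by
    funext i
    have := congrFun h2 i
    simp only [uf] at this
    omega
  exact Subtype.ext this

lemma Ptn.exists_bound (μ : Ptn) : ∃ N : ℕ, ∀ i, N ≤ i → μ.1 i = 0 := by
  obtain ⟨N, hN⟩ := μ.2.2.bddAbove
  refine ⟨N + 1, fun i hi => ?_⟩
  by_contra h
  have : i ∈ Function.support μ.1 := h
  have := hN this
  omega

lemma uf_large (μ : Ptn) {N : ℕ} (hN : ∀ i, N ≤ i → μ.1 i = 0) {i : ℕ} (hi : N ≤ i) :
    uf μ i = i := by simp [uf, hN i hi]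

lemma uf_le (μ : Ptn) (i : ℕ) : uf μ i ≤ i := by simp [uf]


lemma card_filter (μ : Ptn) (P : ℤ → Prop) (s : Finset ℕ) (h : ∀ i, P (uf μ i) ↔ i ∈ s) :
    Nat.card {x : ℤ | x ∈ Dset μ ∧ P x} = s.card := by
  have he : {x : ℤ | x ∈ Dset μ ∧ P x} = uf μ '' ↑s := by
    ext x; constructor
    · rintro ⟨⟨i, rfl⟩, hP⟩; exact ⟨i, (h i).mp hP, rfl⟩
    · rintro ⟨i, hi, rfl⟩; exact ⟨⟨i, rfl⟩, (h i).mpr hi⟩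
  rw [he, Nat.card_coe_set_eq, Set.ncard_image_of_injective _ (uf_strictMono μ).injective,
    Set.ncard_coe_finset]

lemma cells_eq_finset (f g : ℕ → ℕ) (N : ℕ) (hN : ∀ i, N ≤ i → f i = 0) :
    cellsSk f g = ↑((Finset.range N).biUnion fun i =>
      (Finset.Ico (g i) (f i)).map ⟨fun j => (i, j), fun x y h => by simpa using h⟩) := by
  ext ⟨i, j⟩
  simp only [cellsSk, Set.mem_setOf_eq, Finset.coe_biUnion, Finset.mem_coe, Finset.mem_range,
    Set.mem_iUnion, Finset.mem_map, Finset.mem_Ico, Function.Embedding.coeFn_mk, Prod.mk.injEq]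
  constructor
  · rintro ⟨h1, h2⟩
    have : i < N := by by_contra hc; have := hN i (by omega); omega
    exact ⟨i, this, j, ⟨h1, h2⟩, rfl⟩
  · rintro ⟨i', _, j', ⟨h1, h2⟩, rfl, rfl⟩; exact ⟨h1, h2⟩

lemma card_cells (f g : ℕ → ℕ) (N : ℕ) (hN : ∀ i, N ≤ i → f i = 0) :
    Nat.card (cellsSk f g) = ∑ i ∈ Finset.range N, (f i - g i) := by
  rw [cells_eq_finset f g N hN, Nat.card_coe_set_eq, Set.ncard_coe_finset,
    Finset.card_biUnion]
  · simp [Nat.card_Ico]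
  · intro x _ y _ hxy
    simp only [Finset.disjoint_left]
    rintro ⟨a1, a2⟩ ha hb
    simp only [Finset.mem_map, Function.Embedding.coeFn_mk, Prod.mk.injEq] at ha hb
    obtain ⟨_, _, rfl, _⟩ := ha; obtain ⟨_, _, h⟩ := hb; exact hxy (congrArg Prod.fst h).symm

section RF

variable (α β : Ptn) (r s : ℕ)

/-- Ribbon form hypotheses -/
def RFh : Prop :=
  r ≤ s ∧ (∀ i, i < r ∨ s < i → β.1 i = α.1 i) ∧
  (∀ i, r ≤ i → i < s → β.1 i + 1 = α.1 (i+1)) ∧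
  (∀ i, r ≤ i → i ≤ s → β.1 i < α.1 i)

variable {α β r s}

lemma RFh.hle (h : RFh α β r s) : ∀ i, β.1 i ≤ α.1 i := by
  intro i
  rcases Nat.lt_or_ge i r with hi | hi
  · exact (h.2.1 i (Or.inl hi)).le
  rcases le_or_gt i s with hi2 | hi2
  · exact (h.2.2.2 i hi hi2).le
  · exact (h.2.1 i (Or.inr hi2)).le

lemma RFh.mem_cells (h : RFh α β r s) {i j : ℕ} :
    (i, j) ∈ cellsSk α.1 β.1 ↔ (r ≤ i ∧ i ≤ s ∧ β.1 i ≤ j ∧ j < α.1 i) := by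
  constructor
  · rintro ⟨h1, h2⟩
    refine ⟨?_, ?_, h1, h2⟩ <;>
    · by_contra hc
      have := h.2.1 i (by omega)
      simp only [cellsSk] at h1 h2
      omega
  · rintro ⟨_, _, h1, h2⟩; exact ⟨h1, h2⟩

lemma RFh.rows (h : RFh α β r s) : {i : ℕ | ∃ j, (i, j) ∈ cellsSk α.1 β.1} = Set.Icc r s := by
  ext i
  simp only [Set.mem_setOf_eq, Set.mem_Icc]
  constructor
  · rintro ⟨j, hj⟩
    rw [h.mem_cells] at hj
    exact ⟨hj.1, hj.2.1⟩
  · rintro ⟨h1, h2⟩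
    exact ⟨β.1 i, h.mem_cells.mpr ⟨h1, h2, le_refl _, h.2.2.2 i h1 h2⟩⟩

lemma RFh.ht (h : RFh α β r s) : ribbonHt α.1 β.1 = s - r := by
  rw [ribbonHt, h.rows, ← Finset.coe_Icc, Nat.card_coe_set_eq, Set.ncard_coe_finset,
    Nat.card_Icc]
  omega

lemma RFh.card (h : RFh α β r s) :
    (Nat.card (cellsSk α.1 β.1) : ℤ) = (α.1 r : ℤ) - β.1 s + (s - r) := by
  have hrs := h.1
  obtain ⟨N0, hN0⟩ := α.exists_bound
  set N := max N0 (s+1) with hNdef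
  have hN : ∀ i, N ≤ i → α.1 i = 0 := fun i hi => hN0 i (by omega)
  rw [card_cells α.1 β.1 N hN]
  have hcast : ((∑ i ∈ Finset.range N, (α.1 i - β.1 i) : ℕ) : ℤ)
      = ∑ i ∈ Finset.range N, ((α.1 i : ℤ) - β.1 i) := by
    push_cast [Nat.cast_sub (h.hle _)]
    rfl
  rw [hcast]
  have hsub : Finset.Icc r s ⊆ Finset.range N := by
    intro i hi
    simp only [Finset.mem_Icc] at hi
    simp only [Finset.mem_range]
    omega
  rw [← Finset.sum_subset hsub (by
    intro i hi1 hi2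
    simp only [Finset.mem_Icc] at hi2
    have := h.2.1 i (by simp only [Finset.mem_range] at hi1; omega)
    omega)]
  -- telescoping
  have key : ∀ t : ℕ, r + t ≤ s → ∑ i ∈ Finset.Icc r (r + t), ((α.1 i : ℤ) - β.1 i)
      = (α.1 r : ℤ) - β.1 (r + t) + t := by
    intro t
    induction t with
    | zero => intro _; simp
    | succ t ih =>
      intro ht
      rw [← Nat.add_assoc, Finset.sum_Icc_succ_top (by omega), ih (by omega)]
      have := h.2.2.1 (r + t) (by omega) (by omega)
      push_cast [← this]
      ring
  have := key (s - r) (by omega)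
  rw [(by omega : r + (s - r) = s)] at this
  rw [this]
  push_cast
  omega

lemma RFh.no2x2 (h : RFh α β r s) :
    ¬∃ i j, (i, j) ∈ cellsSk α.1 β.1 ∧ (i, j + 1) ∈ cellsSk α.1 β.1 ∧
      (i + 1, j) ∈ cellsSk α.1 β.1 ∧ (i + 1, j + 1) ∈ cellsSk α.1 β.1 := by
  rintro ⟨i, j, h1, h2, h3, h4⟩
  rw [h.mem_cells] at h1 h2 h3 h4
  have hmid := h.2.2.1 i h1.1 (by omega)
  omega

end RF

section Conn

variable {α β : Ptn} {r s : ℕ}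

/-- the step relation restricted to cells -/
def relC (f g : ℕ → ℕ) (x y : ℕ × ℕ) : Prop :=
  adjC x y ∧ x ∈ cellsSk f g ∧ y ∈ cellsSk f g

lemma relC_symm (f g : ℕ → ℕ) : Symmetric (relC f g) := by
  rintro x y ⟨h1, h2, h3⟩
  refine ⟨?_, h3, h2⟩
  unfold adjC at h1 ⊢
  tauto

lemma rtg_symm {f g : ℕ → ℕ} {x y : ℕ × ℕ}
    (h : Relation.ReflTransGen (relC f g) x y) : Relation.ReflTransGen (relC f g) y x :=
  (@Relation.ReflTransGen.symmetric _ _ ⟨fun a b hab => relC_symm f g hab⟩).symm _ _ h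

lemma RFh.row_conn (h : RFh α β r s) {i j j' : ℕ} (hj : (i, j) ∈ cellsSk α.1 β.1)
    (hj' : (i, j') ∈ cellsSk α.1 β.1) :
    Relation.ReflTransGen (relC α.1 β.1) (i, j) (i, j') := by
  have key : ∀ t jj, (i, jj) ∈ cellsSk α.1 β.1 → (i, jj + t) ∈ cellsSk α.1 β.1 →
      Relation.ReflTransGen (relC α.1 β.1) (i, jj) (i, jj + t) := by
    intro t
    induction t with
    | zero => intro jj _ _; exact Relation.ReflTransGen.refl
    | succ t ih =>
      intro jj hjc hjt
      obtain ⟨c1, c2⟩ := hjc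
      obtain ⟨c3, c4⟩ := hjt
      have hmid : (i, jj + t) ∈ cellsSk α.1 β.1 := by
        constructor <;> simp only [cellsSk] at * <;> omega
      refine Relation.ReflTransGen.tail (ih jj ⟨c1, c2⟩ hmid) ?_
      refine ⟨Or.inl ⟨rfl, Or.inr rfl⟩, hmid, ?_⟩
      constructor <;> simp only [cellsSk] at * <;> omega
  rcases le_or_gt j j' with hle | hlt
  · have := key (j' - j) j hj (by rwa [(by omega : j + (j' - j) = j')])
    rwa [(by omega : j + (j' - j) = j')] at this
  · have := key (j - j') j' hj' (by rwa [(by omega : j' + (j - j') = j)])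
    exact rtg_symm (by rwa [(by omega : j' + (j - j') = j)] at this)

lemma RFh.up_conn (h : RFh α β r s) : ∀ i, r ≤ i → i ≤ s →
    Relation.ReflTransGen (relC α.1 β.1) (r, β.1 r) (i, β.1 i) := by
  intro i
  induction i with
  | zero =>
    intro h1 h2
    have : r = 0 := by omega
    subst this
    exact Relation.ReflTransGen.refl
  | succ i ih =>
    intro h1 h2
    rcases Nat.lt_or_ge r (i+1) with hri | hri
    · -- r ≤ i, i + 1 ≤ s
      have hcelli : (i, β.1 i) ∈ cellsSk α.1 β.1 :=
        h.mem_cells.mpr ⟨by omega, by omega, le_refl _, h.2.2.2 i (by omega) (by omega)⟩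
      have hmid := h.2.2.1 i (by omega) (by omega)
      have hcell2 : (i + 1, β.1 i) ∈ cellsSk α.1 β.1 :=
        h.mem_cells.mpr ⟨by omega, by omega, β.2.1 (Nat.le_succ i), by omega⟩
      have hcell3 : (i + 1, β.1 (i+1)) ∈ cellsSk α.1 β.1 :=
        h.mem_cells.mpr ⟨by omega, by omega, le_refl _, h.2.2.2 (i+1) (by omega) h2⟩
      have step1 := ih (by omega) (by omega)
      have step2 : Relation.ReflTransGen (relC α.1 β.1) (i, β.1 i) (i+1, β.1 i) :=
        Relation.ReflTransGen.single ⟨Or.inr ⟨rfl, Or.inr rfl⟩, hcelli, hcell2⟩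
      exact (step1.trans step2).trans (h.row_conn hcell2 hcell3)
    · have : r = i + 1 := by omega
      subst this
      exact Relation.ReflTransGen.refl

lemma RFh.conn (h : RFh α β r s) : ∀ a ∈ cellsSk α.1 β.1, ∀ b ∈ cellsSk α.1 β.1,
    Relation.ReflTransGen (relC α.1 β.1) a b := by
  have base : ∀ c ∈ cellsSk α.1 β.1,
      Relation.ReflTransGen (relC α.1 β.1) (r, β.1 r) c := by
    rintro ⟨i, j⟩ hc
    have hm := h.mem_cells.mp hc
    have hcelli : (i, β.1 i) ∈ cellsSk α.1 β.1 :=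
      h.mem_cells.mpr ⟨hm.1, hm.2.1, le_refl _, h.2.2.2 i hm.1 hm.2.1⟩
    exact (h.up_conn i hm.1 hm.2.1).trans (h.row_conn hcelli hc)
  intro a ha b hb
  exact (rtg_symm (base a ha)).trans (base b hb)

lemma RFh.isRibbon (h : RFh α β r s) {K : ℕ}
    (hK : (K : ℤ) = (α.1 r : ℤ) - β.1 s + (s - r)) : IsRibbon α.1 β.1 K := by
  have hbs := h.2.2.2 s h.1 (le_refl s)
  have hars : α.1 s ≤ α.1 r := α.2.1 h.1
  have hrs := h.1
  refine ⟨h.hle, ?_, by omega, h.conn, h.no2x2⟩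
  have := h.card
  omega

end Conn

section Converse

variable {α β : Ptn}

lemma mem_cellsSk {f g : ℕ → ℕ} {i j : ℕ} : (i, j) ∈ cellsSk f g ↔ g i ≤ j ∧ j < f i :=
  Iff.rfl

lemma crossing {i : ℕ} (hconn : ∀ a ∈ cellsSk α.1 β.1, ∀ b ∈ cellsSk α.1 β.1,
      Relation.ReflTransGen (relC α.1 β.1) a b)
    (c0 c1 : ℕ × ℕ) (h0 : c0 ∈ cellsSk α.1 β.1) (h1 : c1 ∈ cellsSk α.1 β.1)
    (hc0 : c0.1 ≤ i) (hc1 : i < c1.1) :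
    ∃ j, (i, j) ∈ cellsSk α.1 β.1 ∧ (i + 1, j) ∈ cellsSk α.1 β.1 := by
  have key : ∀ x, Relation.ReflTransGen (relC α.1 β.1) c0 x →
      x.1 ≤ i ∨ ∃ j, (i, j) ∈ cellsSk α.1 β.1 ∧ (i + 1, j) ∈ cellsSk α.1 β.1 := by
    intro x hx
    induction hx with
    | refl => exact Or.inl hc0
    | tail hab hrel ih =>
      rename_i b c
      rcases ih with hb | hres
      · rcases le_or_gt c.1 i with hc | hc
        · exact Or.inl hc
        · obtain ⟨hadj, hbc, hcc⟩ := hrel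
          rcases hadj with ⟨he, _⟩ | ⟨he, hor⟩
          · omega
          · have hc1b : c.1 = b.1 + 1 := by omega
            have hbi : b.1 = i := by omega
            refine Or.inr ⟨b.2, ?_, ?_⟩
            · rwa [← hbi, Prod.mk.eta]
            · have : (i + 1, b.2) = c := by
                rw [he, ← hbi, ← hc1b]
              rwa [this]
      · exact Or.inr hres
  rcases key c1 (hconn c0 h0 c1 h1) with hle | hres
  · omega
  · exact hres

lemma isRibbon_RFh {K : ℕ} (h : IsRibbon α.1 β.1 K) :
    ∃ r s : ℕ, RFh α β r s ∧ (K : ℤ) = (α.1 r : ℤ) - β.1 s + (s - r) := by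
  obtain ⟨hle, hcard, hKpos, hconn, h2x2⟩ := h
  have hne : (cellsSk α.1 β.1).Nonempty := by
    by_contra hc
    rw [Set.not_nonempty_iff_eq_empty] at hc
    rw [hc] at hcard
    simp at hcard
    omega
  obtain ⟨⟨i0, j0⟩, hc0⟩ := hne
  rw [mem_cellsSk] at hc0
  obtain ⟨N, hN⟩ := α.exists_bound
  have hmemSf : ∀ i, β.1 i < α.1 i → i ∈ (Finset.range N).filter (fun i => β.1 i < α.1 i) := by
    intro i hi
    simp only [Finset.mem_filter, Finset.mem_range]
    refine ⟨?_, hi⟩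
    by_contra hc
    have := hN i (by omega)
    omega
  set Sf := (Finset.range N).filter (fun i => β.1 i < α.1 i) with hSf
  have hSne : Sf.Nonempty := ⟨i0, hmemSf i0 (by omega)⟩
  set r := Sf.min' hSne with hr
  set s := Sf.max' hSne with hs
  have hrS : r ∈ Sf := Sf.min'_mem hSne
  have hsS : s ∈ Sf := Sf.max'_mem hSne
  have hrlt : β.1 r < α.1 r := by simp only [hSf, Finset.mem_filter] at hrS; exact hrS.2
  have hslt : β.1 s < α.1 s := by simp only [hSf, Finset.mem_filter] at hsS; exact hsS.2
  have hrs : r ≤ s := Sf.min'_le s hsS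
  have hout : ∀ i, i < r ∨ s < i → β.1 i = α.1 i := by
    intro i hi
    rcases Nat.lt_or_ge (β.1 i) (α.1 i) with hlt | hge
    · have hmem := hmemSf i hlt
      have h1 := Sf.min'_le i hmem
      have h2 := Sf.le_max' i hmem
      omega
    · exact le_antisymm (hle i) hge
  have hcellr : (r, β.1 r) ∈ cellsSk α.1 β.1 := mem_cellsSk.mpr ⟨le_refl _, hrlt⟩
  have hcells : (s, β.1 s) ∈ cellsSk α.1 β.1 := mem_cellsSk.mpr ⟨le_refl _, hslt⟩
  have hcross : ∀ i, r ≤ i → i < s →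
      ∃ j, (i, j) ∈ cellsSk α.1 β.1 ∧ (i + 1, j) ∈ cellsSk α.1 β.1 := by
    intro i h1 h2
    exact crossing hconn (r, β.1 r) (s, β.1 s) hcellr hcells (by simpa) (by simpa)
  have hmid : ∀ i, r ≤ i → i < s → β.1 i + 1 = α.1 (i + 1) := by
    intro i h1 h2
    obtain ⟨j, hcj, hcj'⟩ := hcross i h1 h2
    rw [mem_cellsSk] at hcj hcj'
    by_contra hc
    have hab : α.1 (i+1) ≤ α.1 i := α.2.1 (Nat.le_succ i)
    have hbb : β.1 (i+1) ≤ β.1 i := β.2.1 (Nat.le_succ i)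
    exact h2x2 ⟨i, β.1 i, mem_cellsSk.mpr ⟨le_refl _, by omega⟩,
      mem_cellsSk.mpr ⟨by omega, by omega⟩, mem_cellsSk.mpr ⟨by omega, by omega⟩,
      mem_cellsSk.mpr ⟨by omega, by omega⟩⟩
  have hlt : ∀ i, r ≤ i → i ≤ s → β.1 i < α.1 i := by
    intro i h1 h2
    rcases Nat.lt_or_ge i s with hi | hi
    · obtain ⟨j, hcj, _⟩ := hcross i h1 hi
      rw [mem_cellsSk] at hcj
      omega
    · have : i = s := by omega
      subst this; exact hslt
  have hRF : RFh α β r s := ⟨hrs, hout, hmid, hlt⟩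
  exact ⟨r, s, hRF, by rw [← hcard]; exact hRF.card⟩

end Converse

section Maya

variable {α β : Ptn}

lemma mem_Dset {μ : Ptn} {x : ℤ} : x ∈ Dset μ ↔ ∃ i, uf μ i = x := Iff.rfl

lemma uf_def (μ : Ptn) (i : ℕ) : uf μ i = (i : ℤ) - μ.1 i := rfl

lemma card_lt_uf (μ : Ptn) (r : ℕ) : Nat.card {x : ℤ | x ∈ Dset μ ∧ x < uf μ r} = r := by
  rw [card_filter μ _ (Finset.range r)
    (fun i => by simp [(uf_strictMono μ).lt_iff_lt]), Finset.card_range]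

/-- From ribbon form to a Maya-diagram move. -/
lemma RFh.move {r s : ℕ} (h : RFh α β r s) {K : ℕ}
    (hK : (K : ℤ) = (α.1 r : ℤ) - β.1 s + (s - r)) :
    uf α r ∈ Dset α ∧ uf α r + K ∉ Dset α ∧
      Dset β = insert (uf α r + K) (Dset α \ {uf α r}) := by
  have hrs := h.1
  have hdK : (r : ℤ) - α.1 r + K = (s : ℤ) - β.1 s := by rw [hK]; ring
  have hbs := h.2.2.2 s hrs (le_refl s)
  have hinj := (uf_strictMono α).injective
  refine ⟨⟨r, rfl⟩, ?_, ?_⟩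
  · rintro ⟨i, hi⟩
    have hi' : (i : ℤ) - α.1 i = (r : ℤ) - α.1 r + K := hi
    rcases le_or_gt i s with his | his
    · have h1 : (i : ℤ) - α.1 i ≤ (s : ℤ) - α.1 s := (uf_strictMono α).monotone his
      omega
    · have heq : β.1 i = α.1 i := h.2.1 i (Or.inr his)
      have h1 : (s : ℤ) - β.1 s < (i : ℤ) - β.1 i := uf_strictMono β his
      omega
  · ext x
    simp only [Set.mem_insert_iff, Set.mem_diff, Set.mem_singleton_iff, mem_Dset]
    constructor
    · rintro ⟨i, rfl⟩
      rcases Nat.lt_or_ge i r with hir | hir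
      · refine Or.inr ⟨⟨i, ?_⟩, ?_⟩
        · show (i : ℤ) - α.1 i = (i : ℤ) - β.1 i
          rw [h.2.1 i (Or.inl hir)]
        · intro hc
          have hc' : (i : ℤ) - β.1 i = (r : ℤ) - α.1 r := hc
          have heq : β.1 i = α.1 i := h.2.1 i (Or.inl hir)
          have : uf α i = uf α r := by show (i:ℤ) - α.1 i = (r:ℤ) - α.1 r; omega
          exact absurd (hinj this) (by omega)
      rcases Nat.lt_or_ge i s with his | his
      · have hmid := h.2.2.1 i hir his
        refine Or.inr ⟨⟨i + 1, ?_⟩, ?_⟩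
        · show ((i+1 : ℕ) : ℤ) - α.1 (i+1) = (i : ℤ) - β.1 i
          push_cast
          omega
        · intro hc
          have hc' : (i : ℤ) - β.1 i = (r : ℤ) - α.1 r := hc
          have : uf α (i+1) = uf α r := by
            show ((i+1 : ℕ) : ℤ) - α.1 (i+1) = (r:ℤ) - α.1 r
            push_cast
            omega
          exact absurd (hinj this) (by omega)
      rcases Nat.lt_or_ge s i with his2 | his2
      · have heq : β.1 i = α.1 i := h.2.1 i (Or.inr his2)
        refine Or.inr ⟨⟨i, ?_⟩, ?_⟩
        · show (i : ℤ) - α.1 i = (i : ℤ) - β.1 i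
          omega
        · intro hc
          have hc' : (i : ℤ) - β.1 i = (r : ℤ) - α.1 r := hc
          have : uf α i = uf α r := by show (i:ℤ) - α.1 i = (r:ℤ) - α.1 r; omega
          exact absurd (hinj this) (by omega)
      · have his3 : i = s := by omega
        refine Or.inl ?_
        show (i : ℤ) - β.1 i = (r : ℤ) - α.1 r + K
        rw [his3]
        omega
    · rintro (rfl | ⟨⟨i, rfl⟩, hne⟩)
      · exact ⟨s, by show (s:ℤ) - β.1 s = (r:ℤ) - α.1 r + K; omega⟩
      have hir : i ≠ r := by
        intro hc
        subst hc
        exact hne rfl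
      rcases Nat.lt_or_ge i r with h1 | h1
      · refine ⟨i, ?_⟩
        show (i : ℤ) - β.1 i = (i : ℤ) - α.1 i
        rw [h.2.1 i (Or.inl h1)]
      rcases le_or_gt i s with h2 | h2
      · have hi1 : 1 ≤ i := by omega
        have hmid := h.2.2.1 (i-1) (by omega) (by omega)
        have hieq : i - 1 + 1 = i := by omega
        rw [hieq] at hmid
        refine ⟨i - 1, ?_⟩
        show ((i - 1 : ℕ) : ℤ) - β.1 (i-1) = (i : ℤ) - α.1 i
        push_cast [Nat.cast_sub hi1]
        omega
      · refine ⟨i, ?_⟩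
        show (i : ℤ) - β.1 i = (i : ℤ) - α.1 i
        rw [h.2.1 i (Or.inr h2)]

end Maya

section CFun

noncomputable def cfun (α : Ptn) (r s : ℕ) (e : ℤ) : ℕ → ℤ := fun i =>
  if i < r then uf α i else if i < s then uf α (i+1) else if i = s then e else uf α i

variable {α β : Ptn} {r s : ℕ} {e : ℤ}

lemma cfun_strictMono (hrs : r ≤ s) (h1 : ∀ i, i ≤ s → uf α i < e)
    (h2 : ∀ i, s < i → e < uf α i) : StrictMono (cfun α r s e) := by
  have hm := uf_strictMono α
  apply strictMono_nat_of_lt_succ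
  intro i
  unfold cfun
  rcases Nat.lt_or_ge (i+1) r with hA | hA
  · rw [if_pos (by omega), if_pos hA]
    exact hm (by omega)
  rcases Nat.lt_or_ge i r with hB | hB
  · -- i < r ≤ i + 1, so i + 1 = r
    rw [if_pos hB, if_neg (by omega)]
    rcases Nat.lt_or_ge (i+1) s with hC | hC
    · rw [if_pos hC]
      exact hm (by omega)
    · rw [if_neg (by omega), if_pos (by omega)]
      exact h1 i (by omega)
  · rw [if_neg (by omega)]
    rcases Nat.lt_or_ge (i+1) s with hC | hC
    · rw [if_pos (by omega), if_neg (by omega), if_pos hC]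
      exact hm (by omega)
    rcases Nat.lt_or_ge i s with hD | hD
    · -- i < s ≤ i+1 : i+1 = s
      rw [if_pos hD, if_neg (by omega), if_neg (by omega), if_pos (by omega)]
      exact h1 (i+1) (by omega)
    rcases Nat.eq_or_lt_of_le hD with hE | hE
    · -- i = s
      rw [if_neg (by omega), if_pos hE.symm, if_neg (by omega), if_neg (by omega),
        if_neg (by omega)]
      exact h2 (i+1) (by omega)
    · rw [if_neg (by omega), if_neg (by omega), if_neg (by omega), if_neg (by omega),
        if_neg (by omega)]
      exact hm (by omega)

lemma cfun_range (hrs : r ≤ s) :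
    Set.range (cfun α r s e) = insert e (Dset α \ {uf α r}) := by
  have hinj := (uf_strictMono α).injective
  ext x
  simp only [Set.mem_range, Set.mem_insert_iff, Set.mem_diff, Set.mem_singleton_iff, mem_Dset]
  constructor
  · rintro ⟨i, rfl⟩
    unfold cfun
    rcases Nat.lt_or_ge i r with hA | hA
    · rw [if_pos hA]
      exact Or.inr ⟨⟨i, rfl⟩, fun hc => absurd (hinj hc) (by omega)⟩
    rcases Nat.lt_or_ge i s with hB | hB
    · rw [if_neg (by omega), if_pos hB]
      exact Or.inr ⟨⟨i+1, rfl⟩, fun hc => absurd (hinj hc) (by omega)⟩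
    rcases Nat.eq_or_lt_of_le hB with hC | hC
    · rw [if_neg (by omega), if_neg (by omega), if_pos hC.symm]
      exact Or.inl rfl
    · rw [if_neg (by omega), if_neg (by omega), if_neg (by omega)]
      exact Or.inr ⟨⟨i, rfl⟩, fun hc => absurd (hinj hc) (by omega)⟩
  · rintro (rfl | ⟨⟨i, rfl⟩, hne⟩)
    · exact ⟨s, by unfold cfun; rw [if_neg (by omega), if_neg (by omega), if_pos rfl]⟩
    have hir : i ≠ r := fun hc => hne (by rw [hc])
    rcases Nat.lt_or_ge i r with h1 | h1
    · exact ⟨i, by unfold cfun; rw [if_pos h1]⟩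
    rcases le_or_gt i s with h2 | h2
    · refine ⟨i - 1, ?_⟩
      unfold cfun
      rw [if_neg (by omega), if_pos (by omega), (by omega : i - 1 + 1 = i)]
    · exact ⟨i, by unfold cfun; rw [if_neg (by omega), if_neg (by omega), if_neg (by omega)]⟩

/-- From a Maya-diagram move to ribbon form. -/
lemma move_RFh (α β : Ptn) (K : ℕ) (hKpos : 0 < K) (d : ℤ) (hd : d ∈ Dset α)
    (hd2 : d + K ∉ Dset α) (hβ : Dset β = insert (d + K) (Dset α \ {d})) :
    ∃ r s : ℕ, RFh α β r s ∧ uf α r = d ∧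
      (K : ℤ) = (α.1 r : ℤ) - β.1 s + (s - r) ∧ (∀ i, uf α i < d + K ↔ i ≤ s) := by
  obtain ⟨r, hr⟩ := hd
  have hr : uf α r = d := hr
  obtain ⟨N, hN⟩ := α.exists_bound
  set M := max N (d + K).toNat + 1 with hM
  have hMbig : ∀ i, M ≤ i → d + K ≤ uf α i := by
    intro i hi
    have h1 : α.1 i = 0 := hN i (by omega)
    have h2 : uf α i = i := by rw [uf_def, h1]; simp
    rw [h2]
    have ht1 := Int.self_le_toNat (d + K)
    have ht2 : ((d+K).toNat : ℤ) ≤ (i : ℤ) := by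
      have hn : (d+K).toNat ≤ i := by omega
      exact_mod_cast hn
    omega
  have hrT : r ∈ (Finset.range M).filter (fun i => uf α i < d + K) := by
    simp only [Finset.mem_filter, Finset.mem_range]
    constructor
    · by_contra hc
      have := hMbig r (by omega)
      rw [hr] at this
      omega
    · rw [hr]; omega
  set T := (Finset.range M).filter (fun i => uf α i < d + K) with hT
  have hTne : T.Nonempty := ⟨r, hrT⟩
  set s := T.max' hTne with hs
  have hsT : s ∈ T := T.max'_mem hTne
  have hsP : uf α s < d + K := by
    simp only [hT, Finset.mem_filter] at hsT; exact hsT.2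
  have hgt : ∀ i, s < i → d + K < uf α i := by
    intro i hi
    have hne : uf α i ≠ d + K := fun hc => hd2 ⟨i, hc⟩
    rcases Nat.lt_or_ge i M with h1 | h1
    · by_contra hc
      push_neg at hc
      have : i ∈ T := by
        simp only [hT, Finset.mem_filter, Finset.mem_range]
        exact ⟨h1, by omega⟩
      have := T.le_max' i this
      omega
    · have := hMbig i h1
      omega
  have hiff : ∀ i, uf α i < d + K ↔ i ≤ s := by
    intro i
    constructor
    · intro hlt
      by_contra hc
      have := hgt i (by omega)
      omega
    · intro hle
      calc uf α i ≤ uf α s := (uf_strictMono α).monotone hle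
      _ < d + K := hsP
  have hrs : r ≤ s := by
    rw [← hiff]
    rw [hr]
    omega
  -- identify uf β with cfun
  have hufβ : uf β = cfun α r s (d + K) := by
    apply ((uf_strictMono β).range_inj (cfun_strictMono hrs
      (fun i hi => (hiff i).mpr hi) (fun i hi => hgt i hi))).mp
    rw [← Dset_eq_range, hβ, cfun_range hrs, hr]
  have hufβ' : ∀ i, uf β i = cfun α r s (d + K) i := fun i => congrFun hufβ i
  have hout : ∀ i, i < r ∨ s < i → β.1 i = α.1 i := by
    intro i hi
    have := hufβ' i
    unfold cfun at this
    rcases hi with hlt | hgt'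
    · rw [if_pos hlt] at this
      have h2 : (i:ℤ) - β.1 i = (i:ℤ) - α.1 i := this
      omega
    · rw [if_neg (by omega), if_neg (by omega), if_neg (by omega)] at this
      have h2 : (i:ℤ) - β.1 i = (i:ℤ) - α.1 i := this
      omega
  have hmid : ∀ i, r ≤ i → i < s → β.1 i + 1 = α.1 (i+1) := by
    intro i h1 h2
    have := hufβ' i
    unfold cfun at this
    rw [if_neg (by omega), if_pos h2] at this
    have h3 : (i:ℤ) - β.1 i = ((i+1 : ℕ):ℤ) - α.1 (i+1) := this
    push_cast at h3
    omega
  have hseq : (s:ℤ) - β.1 s = d + K := by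
    have := hufβ' s
    unfold cfun at this
    rw [if_neg (by omega), if_neg (by omega), if_pos rfl] at this
    exact this
  have hlt : ∀ i, r ≤ i → i ≤ s → β.1 i < α.1 i := by
    intro i h1 h2
    rcases Nat.lt_or_ge i s with h3 | h3
    · have hm := hmid i h1 h3
      have ha : α.1 (i+1) ≤ α.1 i := α.2.1 (Nat.le_succ i)
      omega
    · have hieq : i = s := by omega
      have hseq' : (i:ℤ) - β.1 i = d + K := by rw [hieq]; exact hseq
      have h4 : (i:ℤ) - α.1 i < d + K := (hiff i).mpr h2
      omega
  have hKeq : (K : ℤ) = (α.1 r : ℤ) - β.1 s + (s - r) := by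
    have hr' : (r:ℤ) - α.1 r = d := hr
    omega
  exact ⟨r, s, ⟨hrs, hout, hmid, hlt⟩, hr, hKeq, hiff⟩

end CFun

section Glue

variable {α β : Ptn}

/-- Packaged data for a Maya move. -/
lemma move_data (α β : Ptn) (K : ℕ) (hKpos : 0 < K) (d : ℤ) (hd : d ∈ Dset α)
    (hd2 : d + K ∉ Dset α) (hβ : Dset β = insert (d + K) (Dset α \ {d})) :
    IsRibbon α.1 β.1 K ∧ ∃ r s : ℕ, r ≤ s ∧ ribbonHt α.1 β.1 = s - r ∧
      Nat.card {x : ℤ | x ∈ Dset α ∧ x < d} = r ∧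
      Nat.card {x : ℤ | (x ∈ Dset α ∧ x ≠ d) ∧ x < d + K} = s := by
  obtain ⟨r, s, hRF, hufr, hKeq, hiff⟩ := move_RFh α β K hKpos d hd hd2 hβ
  have hinj := (uf_strictMono α).injective
  refine ⟨hRF.isRibbon hKeq, r, s, hRF.1, hRF.ht, ?_, ?_⟩
  · rw [← hufr]
    exact card_lt_uf α r
  · have hiff2 : ∀ i, (uf α i ≠ d ∧ uf α i < d + K) ↔ i ∈ (Finset.range (s+1)).erase r := by
      intro i
      rw [Finset.mem_erase, Finset.mem_range]
      constructor
      · rintro ⟨h1, h2⟩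
        have h3 := (hiff i).mp h2
        refine ⟨?_, by omega⟩
        intro hc
        rw [hc] at h1
        exact h1 hufr
      · rintro ⟨h1, h2⟩
        have h3 : i ≤ s := by omega
        refine ⟨?_, (hiff i).mpr h3⟩
        intro hc
        rw [← hufr] at hc
        exact h1 (hinj hc)
    have hset : {x : ℤ | (x ∈ Dset α ∧ x ≠ d) ∧ x < d + K}
        = {x : ℤ | x ∈ Dset α ∧ (x ≠ d ∧ x < d + K)} := by
      ext x; simp only [Set.mem_setOf_eq]; tauto
    rw [hset, card_filter α _ _ hiff2, Finset.card_erase_of_mem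
      (by rw [Finset.mem_range]; have := hRF.1; omega), Finset.card_range]
    omega

lemma ribbon_move (α β : Ptn) (K : ℕ) (h : IsRibbon α.1 β.1 K) :
    ∃ d, d ∈ Dset α ∧ d + K ∉ Dset α ∧ Dset β = insert (d + K) (Dset α \ {d}) := by
  obtain ⟨r, s, hRF, hKeq⟩ := isRibbon_RFh h
  obtain ⟨h1, h2, h3⟩ := hRF.move hKeq
  exact ⟨uf α r, h1, h2, h3⟩

lemma move_symm {A B : Set ℤ} {d e : ℤ} (he : e ∈ B) (hdB : d ∉ B) (hde : d ≠ e)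
    (h : A = insert d (B \ {e})) : B = insert e (A \ {d}) := by
  ext x
  simp only [Set.mem_insert_iff, Set.mem_diff, Set.mem_singleton_iff, h]
  constructor
  · intro hx
    rcases eq_or_ne x e with rfl | hne
    · exact Or.inl rfl
    · exact Or.inr ⟨Or.inr ⟨hx, hne⟩, fun hc => hdB (hc ▸ hx)⟩
  · rintro (rfl | ⟨(rfl | ⟨h1, _⟩) , h2⟩)
    · exact he
    · exact absurd rfl h2
    · exact h1

lemma move_unique {k : ℤ} (hk : k ≠ 0) {d d' : ℤ}
    (hd : d ∈ Dset α) (hd' : d' ∈ Dset α) (h2 : d + k ∉ Dset α) (h2' : d' + k ∉ Dset α)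
    (heq : insert (d + k) (Dset α \ {d}) = insert (d' + k) (Dset α \ {d'})) : d = d' := by
  by_contra hne
  have h3 : d' ∈ insert (d + k) (Dset α \ {d}) := by
    simp only [Set.mem_insert_iff, Set.mem_diff, Set.mem_singleton_iff]
    exact Or.inr ⟨hd', fun hc => hne hc.symm⟩
  rw [heq] at h3
  rcases Set.mem_insert_iff.mp h3 with hc | hc
  · omega
  · exact hc.2 rfl

lemma large_mem (α : Ptn) {N : ℕ} (hN : ∀ i, N ≤ i → α.1 i = 0) {x : ℤ}
    (hx : (N : ℤ) ≤ x) : x ∈ Dset α := by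
  refine ⟨x.toNat, ?_⟩
  have h1 : N ≤ x.toNat := by omega
  have h2 : α.1 x.toNat = 0 := hN _ h1
  show (x.toNat : ℤ) - α.1 x.toNat = x
  rw [h2]
  omega

lemma move_bound (α : Ptn) (k : ℤ) {N : ℕ} (hN : ∀ i, N ≤ i → α.1 i = 0) {d : ℤ}
    (hd : d ∈ Dset α) (hd2 : d + k ∉ Dset α) :
    d ∈ Finset.Icc (-(α.1 0 : ℤ)) ((N : ℤ) + |k|) := by
  rw [Finset.mem_Icc]
  constructor
  · obtain ⟨i, hi⟩ := hd
    have h1 : uf α 0 ≤ uf α i := (uf_strictMono α).monotone (Nat.zero_le i)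
    have h2 : uf α 0 = -(α.1 0 : ℤ) := by rw [uf_def]; omega
    have hi' : (i : ℤ) - α.1 i = d := hi
    rw [h2] at h1
    have : uf α i = (i:ℤ) - α.1 i := rfl
    omega
  · by_contra hc
    push_neg at hc
    have habs := neg_abs_le k
    exact hd2 (large_mem α hN (by omega))

lemma neg_one_pow_eq {r s : ℕ} (hrs : r ≤ s) : ((-1 : ℂ)) ^ (r + s) = (-1) ^ (s - r) := by
  have h : r + s = (s - r) + 2 * r := by omega
  rw [h, pow_add, pow_mul, neg_one_sq, one_pow, mul_one]

noncomputable def bmap (α : Ptn) (k : ℤ) (d : ℤ) : Ptn :=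
  if h : ∃ m : Ptn, Dset m = insert (k + d) (Dset α \ {d}) then h.choose else α

lemma bmap_spec (α : Ptn) (k d : ℤ) (h : ∃ m : Ptn, Dset m = insert (k + d) (Dset α \ {d})) :
    Dset (bmap α k d) = insert (k + d) (Dset α \ {d}) := by
  rw [bmap, dif_pos h]
  exact h.choose_spec

end Glue


section Terms

variable {α : Ptn} {k d : ℤ}

lemma insert_norm (α : Ptn) (k d : ℤ) :
    insert (k - -d) (Dset α \ {-(-d)}) = insert (d + k) (Dset α \ {d}) := by
  rw [neg_neg, sub_neg_eq_add, add_comm]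

lemma Pc_move (hk : k ≠ 0)
    (hPc : -(-d) ∈ Dset α ∧ (k - -d) ∉ Dset α \ {-(-d)} ∧
      ∃ m : Ptn, Dset m = insert (k - -d) (Dset α \ {-(-d)})) :
    d ∈ Dset α ∧ d + k ∉ Dset α ∧ Dset hPc.2.2.choose = insert (d + k) (Dset α \ {d}) := by
  refine ⟨by have h1 := hPc.1; rwa [neg_neg] at h1, ?_, ?_⟩
  · intro hmem
    apply hPc.2.1
    rw [neg_neg, sub_neg_eq_add]
    refine ⟨by rwa [add_comm], ?_⟩
    intro hc
    rw [Set.mem_singleton_iff] at hc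
    omega
  · exact hPc.2.2.choose_spec.trans (insert_norm α k d)

lemma move_Pc (hk : k ≠ 0) (h1 : d ∈ Dset α) (h2 : d + k ∉ Dset α)
    (m : Ptn) (hm : Dset m = insert (d + k) (Dset α \ {d})) :
    -(-d) ∈ Dset α ∧ (k - -d) ∉ Dset α \ {-(-d)} ∧
      ∃ m : Ptn, Dset m = insert (k - -d) (Dset α \ {-(-d)}) := by
  refine ⟨by rwa [neg_neg], ?_, ⟨m, by rwa [insert_norm]⟩⟩
  rw [neg_neg, sub_neg_eq_add]
  rintro ⟨hmem, hne⟩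
  rw [add_comm] at hmem
  exact h2 hmem

lemma bmap_eq (hk : k ≠ 0) (h1 : d ∈ Dset α) (h2 : d + k ∉ Dset α)
    {m : Ptn} (hm : Dset m = insert (d + k) (Dset α \ {d})) : bmap α k d = m := by
  apply Dset_injective
  rw [bmap_spec α k d ⟨m, by rwa [add_comm k d]⟩, hm, add_comm k d]

/-- k ≥ 1 : the term of J_k matches the ribbon-removal term. -/
lemma pos_term (α : Ptn) (k : ℤ) (hk1 : 1 ≤ k) (d : ℤ)
    (hPc : -(-d) ∈ Dset α ∧ (k - -d) ∉ Dset α \ {-(-d)} ∧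
      ∃ m : Ptn, Dset m = insert (k - -d) (Dset α \ {-(-d)})) :
    ((moveCoeff α (k - -d) (-d) : ℂ) • Finsupp.single hPc.2.2.choose (1 : ℂ))
      = (if 1 ≤ k ∧ IsRibbon α.1 (bmap α k d).1 k.toNat then
          ((-1 : ℂ) ^ ribbonHt α.1 (bmap α k d).1) • Finsupp.single (bmap α k d) 1
        else if k ≤ -1 ∧ IsRibbon (bmap α k d).1 α.1 (-k).toNat then
          ((-1 : ℂ) ^ ribbonHt (bmap α k d).1 α.1) • Finsupp.single (bmap α k d) 1
        else 0) := by
  have hk : k ≠ 0 := by omega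
  obtain ⟨hdA, hdB, hspec⟩ := Pc_move hk hPc
  have hKnat : ((k.toNat : ℕ) : ℤ) = k := Int.toNat_of_nonneg (by omega)
  have hd2' : d + ((k.toNat : ℕ) : ℤ) ∉ Dset α := by rwa [hKnat]
  have hβ' : Dset hPc.2.2.choose = insert (d + ((k.toNat : ℕ) : ℤ)) (Dset α \ {d}) := by
    rwa [hKnat]
  obtain ⟨hrib, r, s, hrs, hht, hc1, hc2⟩ :=
    move_data α hPc.2.2.choose k.toNat (by omega) d hdA hd2' hβ'
  have hbm : bmap α k d = hPc.2.2.choose := bmap_eq hk hdA hdB hspec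
  rw [hbm, if_pos ⟨hk1, hrib⟩]
  -- coefficient
  have hC1 : {x : ℤ | x ∈ Dset α ∧ x < -(-d)} = {x : ℤ | x ∈ Dset α ∧ x < d} := by
    rw [neg_neg]
  have hC2 : {x : ℤ | x ∈ Dset α \ {-(-d)} ∧ x < k - -d}
      = {x : ℤ | (x ∈ Dset α ∧ x ≠ d) ∧ x < d + ((k.toNat : ℕ) : ℤ)} := by
    ext x
    simp only [Set.mem_setOf_eq, Set.mem_diff, Set.mem_singleton_iff, neg_neg,
      sub_neg_eq_add, hKnat]
    constructor
    · rintro ⟨⟨hm, hne⟩, hlt⟩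
      exact ⟨⟨hm, hne⟩, by omega⟩
    · rintro ⟨⟨hm, hne⟩, hlt⟩
      exact ⟨⟨hm, hne⟩, by omega⟩
  rw [moveCoeff, hC1, hC2, hc1, hc2, hht]
  push_cast
  rw [neg_one_pow_eq hrs]

/-- k ≤ -1 : the term of J_k matches the ribbon-addition term. -/
lemma neg_term (α : Ptn) (k : ℤ) (hk1 : k ≤ -1) (d : ℤ)
    (hPc : -(-d) ∈ Dset α ∧ (k - -d) ∉ Dset α \ {-(-d)} ∧
      ∃ m : Ptn, Dset m = insert (k - -d) (Dset α \ {-(-d)})) :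
    ((moveCoeff α (k - -d) (-d) : ℂ) • Finsupp.single hPc.2.2.choose (1 : ℂ))
      = (if 1 ≤ k ∧ IsRibbon α.1 (bmap α k d).1 k.toNat then
          ((-1 : ℂ) ^ ribbonHt α.1 (bmap α k d).1) • Finsupp.single (bmap α k d) 1
        else if k ≤ -1 ∧ IsRibbon (bmap α k d).1 α.1 (-k).toNat then
          ((-1 : ℂ) ^ ribbonHt (bmap α k d).1 α.1) • Finsupp.single (bmap α k d) 1
        else 0) := by
  have hk : k ≠ 0 := by omega
  obtain ⟨hdA, hdB, hspec⟩ := Pc_move hk hPc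
  set β' := hPc.2.2.choose with hβ'def
  have hKnat : (((-k).toNat : ℕ) : ℤ) = -k := Int.toNat_of_nonneg (by omega)
  have heB : d + k ∈ Dset β' := by rw [hspec]; exact Or.inl rfl
  have hdnB : d ∉ Dset β' := by
    rw [hspec]
    rintro (hc | ⟨_, hc⟩)
    · omega
    · exact hc rfl
  have hd2' : d + k + (((-k).toNat : ℕ) : ℤ) ∉ Dset β' := by
    have : d + k + (((-k).toNat : ℕ) : ℤ) = d := by omega
    rwa [this]
  have hsymm : Dset α = insert d (Dset β' \ {d + k}) :=
    move_symm hdA hdB (by omega) hspec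
  have hβ2 : Dset α = insert (d + k + (((-k).toNat : ℕ) : ℤ)) (Dset β' \ {d + k}) := by
    have he : d + k + (((-k).toNat : ℕ) : ℤ) = d := by omega
    rwa [he]
  obtain ⟨hrib, r', s', hrs', hht, hc1, hc2⟩ :=
    move_data β' α (-k).toNat (by omega) (d + k) heB hd2' hβ2
  have hbm : bmap α k d = β' := bmap_eq hk hdA hdB hspec
  rw [hbm, if_neg (by rintro ⟨h1, _⟩; omega), if_pos ⟨hk1, hrib⟩]
  -- membership characterization of Dset β'
  have hmemβ : ∀ x : ℤ, x ∈ Dset β' ↔ (x = d + k ∨ (x ∈ Dset α ∧ x ≠ d)) := by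
    intro x
    rw [hspec]
    simp only [Set.mem_insert_iff, Set.mem_diff, Set.mem_singleton_iff]
  have hS1 : {x : ℤ | x ∈ Dset α ∧ x < -(-d)}
      = {x : ℤ | (x ∈ Dset β' ∧ x ≠ d + k) ∧ x < d + k + (((-k).toNat : ℕ) : ℤ)} := by
    ext x
    simp only [Set.mem_setOf_eq, neg_neg, hmemβ]
    constructor
    · rintro ⟨hm, hlt⟩
      refine ⟨⟨Or.inr ⟨hm, by omega⟩, ?_⟩, by omega⟩
      intro hc
      rw [hc] at hm
      exact hdB hm
    · rintro ⟨⟨hor, hne⟩, hlt⟩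
      rcases hor with hc | ⟨hm, _⟩
      · exact absurd hc hne
      · exact ⟨hm, by omega⟩
  have hS2 : {x : ℤ | x ∈ Dset α \ {-(-d)} ∧ x < k - -d}
      = {x : ℤ | x ∈ Dset β' ∧ x < d + k} := by
    ext x
    simp only [Set.mem_setOf_eq, Set.mem_diff, Set.mem_singleton_iff, neg_neg,
      sub_neg_eq_add, hmemβ]
    constructor
    · rintro ⟨⟨hm, hne⟩, hlt⟩
      exact ⟨Or.inr ⟨hm, hne⟩, by omega⟩
    · rintro ⟨hor, hlt⟩
      rcases hor with hc | ⟨hm, hne⟩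
      · omega
      · exact ⟨⟨hm, hne⟩, by omega⟩
  rw [moveCoeff, hS1, hS2, hc2, hc1, hht]
  push_cast
  rw [Nat.add_comm, neg_one_pow_eq hrs']

end Terms



/-- Murnaghan–Nakayama rule, fermionic form: J_k |α⟩ = Σ_{β ∈ R_{k,α}} sgn(α,β)|β⟩,
where R_{k,α} removes a ribbon of length k (k ≥ 1) or adds one of length −k (k ≤ −1). -/
theorem murnaghan_nakayama_fermionic (k : ℤ) (hk : k ≠ 0) (α : Ptn) :
    Jop ℂ k (Finsupp.single α 1) =
      ∑ᶠ β : Ptn,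
        if 1 ≤ k ∧ IsRibbon α.1 β.1 k.toNat then
          ((-1 : ℂ) ^ ribbonHt α.1 β.1) • Finsupp.single β 1
        else if k ≤ -1 ∧ IsRibbon β.1 α.1 (-k).toNat then
          ((-1 : ℂ) ^ ribbonHt β.1 α.1) • Finsupp.single β 1
        else 0 := by
  classical
  obtain ⟨N, hN⟩ := α.exists_bound
  have hpsi : ∀ n : ℤ, psiPsiStar ℂ (k - n) n (Finsupp.single α 1)
      = if h : (-n) ∈ Dset α ∧ (k - n) ∉ Dset α \ {-n} ∧
            ∃ m : Ptn, Dset m = insert (k - n) (Dset α \ {-n})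
        then (moveCoeff α (k - n) n : ℂ) • Finsupp.single h.2.2.choose (1 : ℂ) else 0 := by
    intro n
    simp only [psiPsiStar]
    rw [Finsupp.lift_apply, Finsupp.sum_single_index (by simp), one_smul]
  have hnord : ∀ n : ℤ, nord ℂ (k - n) n (Finsupp.single α 1)
      = psiPsiStar ℂ (k - n) n (Finsupp.single α 1) := by
    intro n
    have hcond : ¬(k - n + n = 0 ∧ n ≤ 0) := by rintro ⟨h1, _⟩; omega
    rw [nord, if_neg hcond]
    simp
  have hJ : Jop ℂ k (Finsupp.single α 1)
      = ∑ᶠ n : ℤ, psiPsiStar ℂ (k - n) n (Finsupp.single α 1) := by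
    rw [Jop, Finsupp.lift_apply, Finsupp.sum_single_index (by simp), one_smul]
    exact finsum_congr hnord
  set T : Finset ℤ := Finset.Icc (-(α.1 0 : ℤ)) ((N : ℤ) + |k|) with hT
  set M : Finset ℤ := T.filter (fun d => (-(-d)) ∈ Dset α ∧ (k - -d) ∉ Dset α \ {-(-d)} ∧
      ∃ m : Ptn, Dset m = insert (k - -d) (Dset α \ {-(-d)})) with hM
  have hbound : ∀ n : ℤ, ((-n) ∈ Dset α ∧ (k - n) ∉ Dset α \ {-n} ∧
        ∃ m : Ptn, Dset m = insert (k - n) (Dset α \ {-n})) → -n ∈ T := by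
    rintro n ⟨h1, h2, _⟩
    have hd2 : -n + k ∉ Dset α := by
      intro hmem
      apply h2
      constructor
      · have he : k - n = -n + k := by ring
        rw [he]; exact hmem
      · intro hc; rw [Set.mem_singleton_iff] at hc; omega
    exact move_bound α k hN h1 hd2
  have hsupp : Function.support (fun n : ℤ => psiPsiStar ℂ (k - n) n (Finsupp.single α 1))
      ⊆ ↑(T.image (fun d : ℤ => -d)) := by
    intro n hn
    rw [Function.mem_support, hpsi n] at hn
    by_cases hc : (-n) ∈ Dset α ∧ (k - n) ∉ Dset α \ {-n} ∧
        ∃ m : Ptn, Dset m = insert (k - n) (Dset α \ {-n})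
    · have := hbound n hc
      simp only [Finset.coe_image, Set.mem_image, Finset.mem_coe]
      exact ⟨-n, this, neg_neg n⟩
    · rw [dif_neg hc] at hn
      exact absurd rfl hn
  rw [hJ, finsum_eq_sum_of_support_subset _ hsupp,
    Finset.sum_image (by intro x _ y _ h; omega : ∀ x ∈ T, ∀ y ∈ T, -x = -y → x = y)]
  rw [← Finset.sum_subset (Finset.filter_subset _ T) (by
    intro d hdT hdM
    rw [hpsi (-d), dif_neg]
    intro hc
    exact hdM (Finset.mem_filter.mpr ⟨hdT, hc⟩))]
  have hGsupp : Function.support (fun β : Ptn =>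
      if 1 ≤ k ∧ IsRibbon α.1 β.1 k.toNat then
        ((-1 : ℂ) ^ ribbonHt α.1 β.1) • Finsupp.single β (1 : ℂ)
      else if k ≤ -1 ∧ IsRibbon β.1 α.1 (-k).toNat then
        ((-1 : ℂ) ^ ribbonHt β.1 α.1) • Finsupp.single β (1 : ℂ)
      else 0) ⊆ ↑(M.image (bmap α k)) := by
    intro β hβ
    rw [Function.mem_support] at hβ
    have hmove : ∃ d, d ∈ Dset α ∧ d + k ∉ Dset α ∧
        Dset β = insert (d + k) (Dset α \ {d}) := by
      by_cases h1 : 1 ≤ k ∧ IsRibbon α.1 β.1 k.toNat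
      · obtain ⟨d, hd, hd2, hβeq⟩ := ribbon_move α β k.toNat h1.2
        have hKnat : ((k.toNat : ℕ) : ℤ) = k := Int.toNat_of_nonneg (by omega)
        rw [hKnat] at hd2 hβeq
        exact ⟨d, hd, hd2, hβeq⟩
      · rw [if_neg h1] at hβ
        by_cases h2 : k ≤ -1 ∧ IsRibbon β.1 α.1 (-k).toNat
        · obtain ⟨e, he, he2, hαeq⟩ := ribbon_move β α (-k).toNat h2.2
          have hKnat : (((-k).toNat : ℕ) : ℤ) = -k := Int.toNat_of_nonneg (by omega)
          rw [hKnat] at he2 hαeq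
          have hnorm : e + -k = e - k := by ring
          rw [hnorm] at he2 hαeq
          have hsym : Dset β = insert e (Dset α \ {e - k}) :=
            move_symm he he2 (by omega) hαeq
          refine ⟨e - k, ?_, ?_, ?_⟩
          · rw [hαeq]; exact Or.inl rfl
          · have h3 : e - k + k = e := by ring
            rw [h3, hαeq]
            rintro (hc | ⟨_, hc⟩)
            · omega
            · exact hc rfl
          · have h3 : e - k + k = e := by ring
            rw [h3]
            exact hsym
        · rw [if_neg h2] at hβ
          exact absurd rfl hβ
    obtain ⟨d, hd, hd2, hβeq⟩ := hmove
    have hdT : d ∈ T := move_bound α k hN hd hd2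
    have hPcd := move_Pc hk hd hd2 β hβeq
    have hdM : d ∈ M := Finset.mem_filter.mpr ⟨hdT, hPcd⟩
    simp only [Finset.coe_image, Set.mem_image, Finset.mem_coe]
    exact ⟨d, hdM, bmap_eq hk hd hd2 hβeq⟩
  have hbinj : ∀ d ∈ M, ∀ d' ∈ M, bmap α k d = bmap α k d' → d = d' := by
    intro d hdM d' hdM'
    obtain ⟨_, hPcd⟩ := Finset.mem_filter.mp hdM
    obtain ⟨_, hPcd'⟩ := Finset.mem_filter.mp hdM'
    obtain ⟨hdA, hdB, hspec⟩ := Pc_move hk hPcd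
    obtain ⟨hdA', hdB', hspec'⟩ := Pc_move hk hPcd'
    intro hbb
    have h1 : bmap α k d = hPcd.2.2.choose := bmap_eq hk hdA hdB hspec
    have h2 : bmap α k d' = hPcd'.2.2.choose := bmap_eq hk hdA' hdB' hspec'
    have h3 : insert (d + k) (Dset α \ {d}) = insert (d' + k) (Dset α \ {d'}) := by
      rw [← hspec, ← hspec', ← h1, ← h2, hbb]
    exact move_unique hk hdA hdA' hdB hdB' h3
  rw [finsum_eq_sum_of_support_subset _ hGsupp, Finset.sum_image hbinj]
  apply Finset.sum_congr rfl
  intro d hdM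
  obtain ⟨hdT, hPcd⟩ := Finset.mem_filter.mp hdM
  rw [hpsi (-d), dif_pos hPcd]
  rcases lt_or_gt_of_ne hk with hkneg | hkpos
  · exact neg_term α k (by omega) d hPcd
  · exact pos_term α k (by omega) d hPcd
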